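/- arXiv:2211.00380 — 3 statements merged into one kernel-verified Lean document; each statement's English description precedes it below -/
import Mathlib

section
/- In a 2-category with products of hom-categories modeled as Cat: a coequinserter can be constructed from a coinserter followed by a coequifier. Concretely in Cat: given functors h : A ⥤ B, f, g : B ⥤ C and a natural transformation γ : h ⋙ f ⟶ h ⋙ g, let (e : C ⥤ D, χ : f ⋙ e ⟶ g ⋙ e) be a coinserter of (f, g) and let q : D ⥤ Q be a coequifier of the two natural transformations whiskerLeft h χ and the transformation induced by γ and e, from h ⋙ f ⋙ e to h ⋙ g ⋙ e. Then (e ⋙ q, whiskerRight χ q) is a coequinserter of γ. -/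
open CategoryTheory

universe v u

variable {A : Type u} [Category.{v} A] {B : Type u} [Category.{v} B]
  {C : Type u} [Category.{v} C]

/-- `(e, χ)` is a coinserter of the parallel pair `(f, g)`:
universal 1-cell equipped with a 2-cell `f ⋙ e ⟶ g ⋙ e`, in both the 1-dimensional
and 2-dimensional sense. -/
def IsCoinserter (f g : B ⥤ C) {D : Type u} [Category.{v} D]
    (e : C ⥤ D) (χ : f ⋙ e ⟶ g ⋙ e) : Prop :=
  (∀ (R : Type u) [Category.{v} R] (u : C ⥤ R) (ε : f ⋙ u ⟶ g ⋙ u),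
    ∃! t : D ⥤ R, ∃ _ : e ⋙ t = u, HEq (Functor.whiskerRight χ t) ε) ∧
  (∀ (R : Type u) [Category.{v} R] (t t' : D ⥤ R) (θ : e ⋙ t ⟶ e ⋙ t'),
    Functor.whiskerRight χ t ≫ Functor.whiskerLeft g θ = Functor.whiskerLeft f θ ≫ Functor.whiskerRight χ t' →
      ∃! θ' : t ⟶ t', Functor.whiskerLeft e θ' = θ)

/-- `q` is a coequifier of the parallel 2-cells `σ, τ : u ⟶ v`. -/
def IsCoequifier {D : Type u} [Category.{v} D] {u v : B ⥤ D} (σ τ : u ⟶ v)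
    {Q : Type u} [Category.{v} Q] (q : D ⥤ Q) : Prop :=
  Functor.whiskerRight σ q = Functor.whiskerRight τ q ∧
  (∀ (R : Type u) [Category.{v} R] (w : D ⥤ R),
    Functor.whiskerRight σ w = Functor.whiskerRight τ w → ∃! t : Q ⥤ R, q ⋙ t = w) ∧
  (∀ (R : Type u) [Category.{v} R] (t t' : Q ⥤ R) (θ : q ⋙ t ⟶ q ⋙ t'),
    ∃! θ' : t ⟶ t', Functor.whiskerLeft q θ' = θ)

/-- `(i, φ)` is a coequinserter of the 2-cell `γ : h ⋙ f ⟶ h ⋙ g`. -/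
def IsCoequinserter (h : A ⥤ B) (f g : B ⥤ C) (γ : h ⋙ f ⟶ h ⋙ g)
    {Q : Type u} [Category.{v} Q] (i : C ⥤ Q) (φ : f ⋙ i ⟶ g ⋙ i) : Prop :=
  Functor.whiskerLeft h φ = Functor.whiskerRight γ i ∧
  (∀ (R : Type u) [Category.{v} R] (u : C ⥤ R) (ε : f ⋙ u ⟶ g ⋙ u),
    Functor.whiskerLeft h ε = Functor.whiskerRight γ u →
      ∃! t : Q ⥤ R, ∃ _ : i ⋙ t = u, HEq (Functor.whiskerRight φ t) ε) ∧
  (∀ (R : Type u) [Category.{v} R] (t t' : Q ⥤ R) (θ : i ⋙ t ⟶ i ⋙ t'),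
    Functor.whiskerRight φ t ≫ Functor.whiskerLeft g θ = Functor.whiskerLeft f θ ≫ Functor.whiskerRight φ t' →
      ∃! θ' : t ⟶ t', Functor.whiskerLeft i θ' = θ)

section

variable {D : Type u} [Category.{v} D] {Q : Type u} [Category.{v} Q]

/-- The compatibility condition of a coequinserter, for the 2-cell `χ` transported along `t`,
is exactly the equation that a coequifier of `whiskerLeft h χ` and `whiskerRight γ e` imposes. -/
theorem whiskerLeft_whiskerRight_eq_whiskerRight_comp_iff {R : Type*} [Category R]
    {h : A ⥤ B} {f g : B ⥤ C} {e : C ⥤ D} (χ : f ⋙ e ⟶ g ⋙ e) (γ : h ⋙ f ⟶ h ⋙ g)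
    (t : D ⥤ R) :
    Functor.whiskerLeft h (Functor.whiskerRight χ t : (f ⋙ e) ⋙ t ⟶ (g ⋙ e) ⋙ t) =
        Functor.whiskerRight γ (e ⋙ t) ↔
      Functor.whiskerRight (Functor.whiskerLeft h χ) t =
        Functor.whiskerRight (Functor.whiskerRight γ e) t := by
  constructor <;> intro H <;> ext a <;> simpa using NatTrans.congr_app H a

theorem IsCoinserter.existsUnique_desc_comp {h : A ⥤ B} {f g : B ⥤ C} {γ : h ⋙ f ⟶ h ⋙ g}
    {e : C ⥤ D} {χ : f ⋙ e ⟶ g ⋙ e} (hcoins : IsCoinserter f g e χ) {q : D ⥤ Q}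
    (hcoeq : IsCoequifier (u := h ⋙ (f ⋙ e)) (v := h ⋙ (g ⋙ e))
      (Functor.whiskerLeft h χ) (Functor.whiskerRight γ e) q)
    (R : Type u) [Category.{v} R] (u : C ⥤ R) (ε : f ⋙ u ⟶ g ⋙ u)
    (hε : Functor.whiskerLeft h ε = Functor.whiskerRight γ u) :
    ∃! t : Q ⥤ R, ∃ _ : (e ⋙ q) ⋙ t = u,
      HEq (Functor.whiskerRight (Functor.whiskerRight χ q) t) ε := by
  obtain ⟨s, ⟨rfl, hχs⟩, hs_unique⟩ := hcoins.1 R u ε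
  obtain rfl : Functor.whiskerRight χ s = ε := eq_of_heq hχs
  have hs : Functor.whiskerRight (Functor.whiskerLeft h χ) s =
      Functor.whiskerRight (Functor.whiskerRight γ e) s :=
    (whiskerLeft_whiskerRight_eq_whiskerRight_comp_iff χ γ s).1 hε
  obtain ⟨t, rfl, ht_unique⟩ := hcoeq.2.1 R s hs
  exact ⟨t, ⟨rfl, HEq.rfl⟩, fun t' ht' => ht_unique t' (hs_unique (q ⋙ t') ht')⟩

theorem IsCoinserter.existsUnique_twoCell_comp {f g : B ⥤ C} {e : C ⥤ D}
    {χ : f ⋙ e ⟶ g ⋙ e} (hcoins : IsCoinserter f g e χ) {u v : A ⥤ D} {σ τ : u ⟶ v}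
    {q : D ⥤ Q} (hcoeq : IsCoequifier σ τ q)
    (R : Type u) [Category.{v} R] (t t' : Q ⥤ R) (θ : (e ⋙ q) ⋙ t ⟶ (e ⋙ q) ⋙ t')
    (hθ : Functor.whiskerRight (Functor.whiskerRight χ q) t ≫ Functor.whiskerLeft g θ =
      Functor.whiskerLeft f θ ≫ Functor.whiskerRight (Functor.whiskerRight χ q) t') :
    ∃! θ' : t ⟶ t', Functor.whiskerLeft (e ⋙ q) θ' = θ := by
  obtain ⟨θ₀, rfl, hθ₀_unique⟩ := hcoins.2 R (q ⋙ t) (q ⋙ t') θ hθ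
  obtain ⟨θ', rfl, hθ'_unique⟩ := hcoeq.2.2 R t t' θ₀
  exact ⟨θ', rfl, fun θ'' hθ'' => hθ'_unique θ'' (hθ₀_unique _ hθ'')⟩

end

/-- A coequinserter can be constructed as a coinserter followed by a coequifier:
if `(e, χ)` is a coinserter of `(f, g)` and `q` is a coequifier of `Functor.whiskerLeft h χ`
and the 2-cell induced by `γ` and `e`, then `(e ⋙ q, Functor.whiskerRight χ q)` is a
coequinserter of `γ`. -/
theorem stmt_13 (h : A ⥤ B) (f g : B ⥤ C) (γ : h ⋙ f ⟶ h ⋙ g)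
    {D : Type u} [Category.{v} D] (e : C ⥤ D) (χ : f ⋙ e ⟶ g ⋙ e)
    (hcoins : IsCoinserter f g e χ)
    {Q : Type u} [Category.{v} Q] (q : D ⥤ Q)
    (hcoeq : IsCoequifier
      (u := h ⋙ (f ⋙ e)) (v := h ⋙ (g ⋙ e))
      (Functor.whiskerLeft h χ) (Functor.whiskerRight γ e) q) :
    IsCoequinserter h f g γ (e ⋙ q)
      ((Functor.whiskerRight χ q : (f ⋙ e) ⋙ q ⟶ (g ⋙ e) ⋙ q) :
        f ⋙ (e ⋙ q) ⟶ g ⋙ (e ⋙ q)) :=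
  ⟨(whiskerLeft_whiskerRight_eq_whiskerRight_comp_iff χ γ q).2 hcoeq.1,
    hcoins.existsUnique_desc_comp hcoeq, hcoins.existsUnique_twoCell_comp hcoeq⟩
end

section
/- Kancellation for units of a KZ situation in Cat: let t : S ⥤ TS and s : S ⥤ ST be functors, X a category, and f : S ⥤ X. Suppose the left Kan extension f/t exists with invertible unit, the left Kan extension t/s exists, and t/s is 'admissible' in the sense that Kan extensions along s out of objects Kan injective w.r.t. t compose. Then (f/t) ∘ (t/s) ≅ f/s, i.e. the composite of the two Kan extensions is a left Kan extension of f along s, provided f/t preserves the left Kan extension (t/s, ξ_t). -/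
open CategoryTheory

namespace CategoryTheory.Functor

lemma isLeftKanExtension_iso_hom_comp {C D H : Type*} [Category C] [Category D] [Category H]
    {L : C ⥤ D} {F G : C ⥤ H} {F' : D ⥤ H} (e : F ≅ G) (α : G ⟶ L ⋙ F')
    [F'.IsLeftKanExtension α] : F'.IsLeftKanExtension (e.hom ≫ α) :=
  (isLeftKanExtension_iff_of_iso₂ (e.hom ≫ α) α e (Iso.refl F') (by simp)).2 inferInstance

end CategoryTheory.Functor

theorem stmt_15_general {S TS ST X : Type*} [Category S] [Category TS] [Category ST] [Category X]
    (t : S ⥤ TS) (s : S ⥤ ST) (f : S ⥤ X)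
    (ft : TS ⥤ X) (ζ : f ⟶ t ⋙ ft) (hζ : IsIso ζ)
    (ts : ST ⥤ TS) (ξ : t ⟶ s ⋙ ts)
    (hpres : (ts ⋙ ft).IsLeftKanExtension
      ((Functor.whiskerRight ξ ft : t ⋙ ft ⟶ (s ⋙ ts) ⋙ ft) : t ⋙ ft ⟶ s ⋙ (ts ⋙ ft))) :
    (ts ⋙ ft).IsLeftKanExtension
      ((ζ ≫ Functor.whiskerRight ξ ft : f ⟶ (s ⋙ ts) ⋙ ft) : f ⟶ s ⋙ (ts ⋙ ft)) :=
  Functor.isLeftKanExtension_iso_hom_comp (asIso ζ) _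

/-- Kancellation: if `(ft, ζ)` is a left Kan extension of `f` along `t` with `ζ`
invertible, `(ts, ξ)` is a left Kan extension of `t` along `s`, and `ft` preserves the
latter Kan extension, then `(ts ⋙ ft, ζ ≫ whiskerRight ξ ft)` is a left Kan extension
of `f` along `s`. -/
theorem stmt_15 {S TS ST X : Type*} [Category S] [Category TS] [Category ST] [Category X]
    (t : S ⥤ TS) (s : S ⥤ ST) (f : S ⥤ X)
    (ft : TS ⥤ X) (ζ : f ⟶ t ⋙ ft) [ft.IsLeftKanExtension ζ] (hζ : IsIso ζ)
    (ts : ST ⥤ TS) (ξ : t ⟶ s ⋙ ts) [ts.IsLeftKanExtension ξ]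
    (hpres : (ts ⋙ ft).IsLeftKanExtension
      ((Functor.whiskerRight ξ ft : t ⋙ ft ⟶ (s ⋙ ts) ⋙ ft) : t ⋙ ft ⟶ s ⋙ (ts ⋙ ft))) :
    (ts ⋙ ft).IsLeftKanExtension
      ((ζ ≫ Functor.whiskerRight ξ ft : f ⟶ (s ⋙ ts) ⋙ ft) : f ⟶ s ⋙ (ts ⋙ ft)) :=
  stmt_15_general t s f ft ζ hζ ts ξ hpres
end

section
/- Closure of Kan injective 1-cells under lalis: let h be a functor, and suppose f : A ⥤ B is left Kan injective with respect to h (both A, B are Kan injective and f preserves the Kan extensions along h). Given lalis l₁ : A ⥤ X and l₂ : B ⥤ Y (left adjoints with invertible counits, right adjoints r₁, r₂) and a natural isomorphism l₂ ∘ f ≅ g ∘ l₁ for some g : X ⥤ Y, then g is left Kan injective with respect to h: X and Y are Kan injective w.r.t. h and g preserves left Kan extensions along h. -/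
/-!
For a lali `l₁ ⊣ r₁` (invertible counit), every `t : C ⥤ X` is isomorphic to `(t ⋙ r₁) ⋙ l₁`,
so `l₁` applied to a Kan extension of `t ⋙ r₁` in `A` is a Kan extension of `t`, with invertible
unit when the former has one. Applying `g` to it gives, through the square `f ⋙ l₂ ≅ l₁ ⋙ g`,
`l₂ ∘ f` applied to the Kan extension of `t ⋙ r₁`, which is again a Kan extension because `f`
preserves them by assumption and the left adjoint `l₂` preserves all of them.
-/

open CategoryTheory

namespace CategoryTheory.Functor

lemma isLeftKanExtension_of_bijective {C D H : Type*} [Category C] [Category D] [Category H]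
    {L : C ⥤ D} {F : C ⥤ H} (F' : D ⥤ H) (α : F ⟶ L ⋙ F')
    (hα : ∀ G : D ⥤ H, Function.Bijective fun β : F' ⟶ G => α ≫ whiskerLeft L β) :
    F'.IsLeftKanExtension α := by
  refine ⟨⟨Limits.IsInitial.ofUniqueHom
    (fun G => StructuredArrow.homMk ((hα G.right).2 G.hom).choose ?_) fun G m => ?_⟩⟩
  · exact ((hα G.right).2 G.hom).choose_spec
  · ext1
    apply (hα G.right).1
    exact (StructuredArrow.w m).trans ((hα G.right).2 G.hom).choose_spec.symm

instance preservesLeftKanExtension_of_isLeftAdjoint {A B C D : Type*} [Category A] [Category B]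
    [Category C] [Category D] (G : B ⥤ D) [G.IsLeftAdjoint] (F : A ⥤ B) (L : A ⥤ C) :
    G.PreservesLeftKanExtension F L where
  preserves F' α _ := by
    let adj := Adjunction.ofIsLeftAdjoint G
    refine isLeftKanExtension_of_bijective _ _ fun E => ?_
    -- transposing along `adj` turns restriction along the new unit into restriction along `α`
    have : (fun β : F' ⋙ G ⟶ E => (whiskerRight α G ≫ (associator _ _ _).hom) ≫ whiskerLeft L β) =
        ((adj.whiskerRight A).homEquiv F (L ⋙ E)).symm ∘
          F'.homEquivOfIsLeftKanExtension α (E ⋙ G.rightAdjoint) ∘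
            (adj.whiskerRight C).homEquiv F' E := by
      ext β a
      simp only [Function.comp_apply, Adjunction.homEquiv_counit, Adjunction.homEquiv_unit]
      simp
    rw [this]
    exact (Equiv.bijective _).comp ((Equiv.bijective _).comp (Equiv.bijective _))

namespace PreservesLeftKanExtension

variable {A B C D E : Type*} [Category A] [Category B] [Category C] [Category D] [Category E]

lemma of_iso {G G' : B ⥤ D} (e : G ≅ G') (F : A ⥤ B) (L : A ⥤ C)
    [G.PreservesLeftKanExtension F L] : G'.PreservesLeftKanExtension F L where
  preserves F' α _ := (isLeftKanExtension_iff_of_iso₂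
    (whiskerRight α G ≫ (associator _ _ _).hom) _ (isoWhiskerLeft F e)
    (isoWhiskerLeft F' e) (by ext; simp)).1 inferInstance

lemma of_iso_left (G : B ⥤ D) {F F₂ : A ⥤ B} (e : F ≅ F₂) (L : A ⥤ C)
    [G.PreservesLeftKanExtension F L] : G.PreservesLeftKanExtension F₂ L where
  preserves F' α _ := by
    have : F'.IsLeftKanExtension (e.hom ≫ α) :=
      (isLeftKanExtension_iff_of_iso₂ α _ e.symm (Iso.refl _) (by simp)).1 ‹_›
    exact (isLeftKanExtension_iff_of_iso₂
      (whiskerRight (e.hom ≫ α) G ≫ (associator _ _ _).hom) _ (isoWhiskerRight e G) (Iso.refl _)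
      (by ext; simp)).1 inferInstance

instance comp (G₁ : B ⥤ D) (G₂ : D ⥤ E) (F : A ⥤ B) (L : A ⥤ C)
    [G₁.PreservesLeftKanExtension F L] [G₂.PreservesLeftKanExtension (F ⋙ G₁) L] :
    (G₁ ⋙ G₂).PreservesLeftKanExtension F L where
  preserves F' α _ := (isLeftKanExtension_iff_of_iso₂
    (whiskerRight (whiskerRight α G₁ ≫ (associator _ _ _).hom) G₂ ≫ (associator _ _ _).hom) _
    (associator F G₁ G₂) (associator F' G₁ G₂) (by ext; simp)).1 inferInstance

lemma of_comp (G₁ : B ⥤ D) (G₂ : D ⥤ E) (F : A ⥤ B) (L : A ⥤ C) [L.HasLeftKanExtension F]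
    [G₁.PreservesLeftKanExtension F L] [(G₁ ⋙ G₂).PreservesLeftKanExtension F L] :
    G₂.PreservesLeftKanExtension (F ⋙ G₁) L :=
  .mk_of_preserves_isLeftKanExtension _ _ _ (L.leftKanExtension F ⋙ G₁)
    (whiskerRight (L.leftKanExtensionUnit F) G₁ ≫ (associator _ _ _).hom) <|
    (isLeftKanExtension_iff_of_iso₂
      (whiskerRight (L.leftKanExtensionUnit F) (G₁ ⋙ G₂) ≫ (associator _ _ _).hom) _
      (associator F G₁ G₂).symm (associator _ G₁ G₂).symm (by ext; simp)).1 inferInstance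

end PreservesLeftKanExtension

end CategoryTheory.Functor

namespace CategoryTheory

open CategoryTheory.Functor

variable {C C' A B X Y : Type*} [Category C] [Category C'] [Category A] [Category B]
  [Category X] [Category Y]

def IsLeftKanInjective (h : C ⥤ C') (Z : Type*) [Category Z] : Prop :=
  ∀ t : C ⥤ Z, ∃ (T : C' ⥤ Z) (α : t ⟶ h ⋙ T), T.IsLeftKanExtension α ∧ IsIso α

noncomputable def Adjunction.whiskerLeftCounitIso {l : A ⥤ X} {r : X ⥤ A} (adj : l ⊣ r)
    [IsIso adj.counit] (t : C ⥤ X) : (t ⋙ r) ⋙ l ≅ t :=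
  Functor.associator t r l ≪≫ isoWhiskerLeft t (asIso adj.counit) ≪≫ t.rightUnitor

lemma IsLeftKanInjective.of_lali {h : C ⥤ C'} (hA : IsLeftKanInjective h A) {l : A ⥤ X}
    {r : X ⥤ A} (adj : l ⊣ r) [IsIso adj.counit] : IsLeftKanInjective h X := by
  intro t
  obtain ⟨T, α, hT, hα⟩ := hA (t ⋙ r)
  have := adj.isLeftAdjoint
  let α' := whiskerRight α l ≫ (Functor.associator _ _ _).hom
  refine ⟨T ⋙ l, (adj.whiskerLeftCounitIso t).inv ≫ α', ?_, inferInstance⟩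
  exact (isLeftKanExtension_iff_of_iso₂ α' _ (adj.whiskerLeftCounitIso t) (Iso.refl _)
    (by simp)).1 inferInstance

lemma preservesLeftKanExtension_of_lali {h : C ⥤ C'} (hA : IsLeftKanInjective h A)
    {f : A ⥤ B} {g : X ⥤ Y} [∀ t : C ⥤ A, f.PreservesLeftKanExtension t h]
    {l₁ : A ⥤ X} {r₁ : X ⥤ A} (adj₁ : l₁ ⊣ r₁) [IsIso adj₁.counit] {l₂ : B ⥤ Y}
    [l₂.IsLeftAdjoint] (sq : f ⋙ l₂ ≅ l₁ ⋙ g) (t : C ⥤ X) :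
    g.PreservesLeftKanExtension t h := by
  obtain ⟨S, β, hS, -⟩ := hA (t ⋙ r₁)
  have := HasLeftKanExtension.mk S β
  have := adj₁.isLeftAdjoint
  have : (l₁ ⋙ g).PreservesLeftKanExtension (t ⋙ r₁) h := .of_iso sq _ _
  have : g.PreservesLeftKanExtension ((t ⋙ r₁) ⋙ l₁) h := .of_comp l₁ g _ _
  exact .of_iso_left g (adj₁.whiskerLeftCounitIso t) h

end CategoryTheory

/-- Closure of Kan injective 1-cells under lalis: if `f : A ⥤ B` is left Kan injective
with respect to `h` (its domain and codomain are Kan injective and it preserves Kan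
extensions along `h`), `l₁ : A ⥤ X`, `l₂ : B ⥤ Y` are lalis with right adjoints
`r₁`, `r₂`, and `f ⋙ l₂ ≅ l₁ ⋙ g`, then `g : X ⥤ Y` is left Kan injective with
respect to `h`. -/
theorem stmt_16 {Cc Cc' A B X Y : Type*}
    [Category Cc] [Category Cc'] [Category A] [Category B] [Category X] [Category Y]
    (h : Cc ⥤ Cc') (f : A ⥤ B) (g : X ⥤ Y)
    (hA : ∀ t : Cc ⥤ A, ∃ (T : Cc' ⥤ A) (α : t ⟶ h ⋙ T),
      T.IsLeftKanExtension α ∧ IsIso α)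
    (hB : ∀ t : Cc ⥤ B, ∃ (T : Cc' ⥤ B) (α : t ⟶ h ⋙ T),
      T.IsLeftKanExtension α ∧ IsIso α)
    (hf : ∀ (t : Cc ⥤ A) (T : Cc' ⥤ A) (α : t ⟶ h ⋙ T),
      T.IsLeftKanExtension α →
        (T ⋙ f).IsLeftKanExtension
          (Functor.whiskerRight α f ≫ (Functor.associator h T f).hom))
    (l₁ : A ⥤ X) (r₁ : X ⥤ A) (adj₁ : l₁ ⊣ r₁) (hc₁ : IsIso adj₁.counit)
    (l₂ : B ⥤ Y) (r₂ : Y ⥤ B) (adj₂ : l₂ ⊣ r₂) (hc₂ : IsIso adj₂.counit)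
    (sq : f ⋙ l₂ ≅ l₁ ⋙ g) :
    (∀ t : Cc ⥤ X, ∃ (T : Cc' ⥤ X) (α : t ⟶ h ⋙ T),
      T.IsLeftKanExtension α ∧ IsIso α) ∧
    (∀ t : Cc ⥤ Y, ∃ (T : Cc' ⥤ Y) (α : t ⟶ h ⋙ T),
      T.IsLeftKanExtension α ∧ IsIso α) ∧
    (∀ (t : Cc ⥤ X) (T : Cc' ⥤ X) (α : t ⟶ h ⋙ T),
      T.IsLeftKanExtension α →
        (T ⋙ g).IsLeftKanExtension
          (Functor.whiskerRight α g ≫ (Functor.associator h T g).hom)) := by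
  have := adj₂.isLeftAdjoint
  have (t : Cc ⥤ A) : f.PreservesLeftKanExtension t h := ⟨hf t⟩
  refine ⟨IsLeftKanInjective.of_lali hA adj₁, IsLeftKanInjective.of_lali hB adj₂,
    fun t T α _ => ?_⟩
  have := preservesLeftKanExtension_of_lali hA adj₁ sq t
  infer_instance
end
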